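/- Let m > 0, α ∈ (0,1), Θ > 0, and let m₁ < m₂ be positive integers such that m₁α and m₂α are both positive integers. Define P(Θ, m; α) = ∫_ℝ F_bin(⌊mα⌋−1; m−1, Φ(z−Θ)) φ(z) dz. Then P(Θ, m₁; α) < P(Θ, m₂; α). -/

import Mathlib

open MeasureTheory Finset

/-- Binomial CDF: probability of at most `k` successes in `n` trials. -/
noncomputable def binCDF (k : ℤ) (n : ℕ) (p : ℝ) : ℝ :=
  ∑ j ∈ Finset.range (k + 1).toNat, (n.choose j : ℝ) * p ^ j * (1 - p) ^ (n - j)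

/-- Standard normal density. -/
noncomputable def stdPdf (z : ℝ) : ℝ := (Real.sqrt (2 * Real.pi))⁻¹ * Real.exp (-z ^ 2 / 2)

/-- Standard normal CDF. -/
noncomputable def stdCdf (z : ℝ) : ℝ := ∫ u in Set.Iic z, stdPdf u

/-- Power of the randomization test: `P(Θ, m; α)`. -/
noncomputable def power (Θ : ℝ) (m : ℕ) (α : ℝ) : ℝ :=
  ∫ z : ℝ, binCDF (⌊(m : ℝ) * α⌋ - 1) (m - 1) (stdCdf (z - Θ)) * stdPdf z

/-!
With `K = mα`, write `F_m t = binCDF (K - 1) (m - 1) t`. The substitution `t = Φ z` turns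
`∫ F_m (Φ z) φ z dz` into `∫₀¹ F_m = K / m = α`, so `h = F_{m₂} - F_{m₁}` has integral zero
against `φ` (also after a shift by `Θ`). The derivative of `h` is
`t^k₁ (1 - t)^l₁ (D₁ - D₂ t^a (1 - t)^b)` with `a, b ≥ 1`; the last factor is positive, then
negative, then positive on `(0, 1)`, and as `h 0 = h 1 = 0` the function `h` changes sign exactly
once, from `+` to `-`. Finally `P(Θ, m₂) - P(Θ, m₁) = ∫ h (Φ (z - Θ)) φ (z - Θ) w z dz` with the
decreasing likelihood ratio `w z = φ z / φ (z - Θ)`, and a mean-zero function that changes sign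
once from `+` to `-` has positive integral against a decreasing weight.
-/

open Filter Real Set Topology ProbabilityTheory

lemma stdPdf_eq_gaussianPDFReal : stdPdf = gaussianPDFReal 0 1 := by
  ext z
  simp [stdPdf, gaussianPDFReal]

lemma stdPdf_pos (z : ℝ) : 0 < stdPdf z := by
  rw [stdPdf_eq_gaussianPDFReal]
  exact gaussianPDFReal_pos 0 1 z one_ne_zero

@[fun_prop]
lemma continuous_stdPdf : Continuous stdPdf := by
  unfold stdPdf
  fun_prop

lemma integrable_stdPdf : Integrable stdPdf := by
  rw [stdPdf_eq_gaussianPDFReal]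
  exact integrable_gaussianPDFReal 0 1

lemma stdCdf_eq_cdf : stdCdf = cdf (gaussianReal 0 1) := by
  ext z
  rw [cdf_eq_real, measureReal_def, gaussianReal_apply_eq_integral 0 one_ne_zero,
    ENNReal.toReal_ofReal (integral_nonneg fun _ => gaussianPDFReal_nonneg 0 1 _), stdCdf,
    stdPdf_eq_gaussianPDFReal]

lemma hasDerivAt_stdCdf (z : ℝ) : HasDerivAt stdCdf (stdPdf z) z := by
  have hsplit : ∀ x, stdCdf x = stdCdf 0 + ∫ u in (0 : ℝ)..x, stdPdf u := fun x => by
    rw [stdCdf, stdCdf, ← intervalIntegral.integral_Iic_sub_Iic integrable_stdPdf.integrableOn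
      integrable_stdPdf.integrableOn]
    ring
  rw [funext hsplit]
  exact (intervalIntegral.integral_hasDerivAt_right integrable_stdPdf.intervalIntegrable
    (continuous_stdPdf.stronglyMeasurableAtFilter _ _) continuous_stdPdf.continuousAt).const_add _

@[fun_prop]
lemma continuous_stdCdf : Continuous stdCdf :=
  continuous_iff_continuousAt.2 fun z => (hasDerivAt_stdCdf z).continuousAt

lemma stdCdf_mem_Icc (z : ℝ) : stdCdf z ∈ Icc (0 : ℝ) 1 := by
  rw [stdCdf_eq_cdf]
  exact ⟨cdf_nonneg _ z, cdf_le_one _ z⟩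

lemma monotone_stdCdf : Monotone stdCdf := by
  rw [stdCdf_eq_cdf]
  exact monotone_cdf _

lemma tendsto_stdCdf_atBot : Tendsto stdCdf atBot (𝓝 0) :=
  stdCdf_eq_cdf ▸ tendsto_cdf_atBot _

lemma tendsto_stdCdf_atTop : Tendsto stdCdf atTop (𝓝 1) :=
  stdCdf_eq_cdf ▸ tendsto_cdf_atTop _

lemma Ioo_subset_range_stdCdf : Ioo (0 : ℝ) 1 ⊆ range stdCdf := fun _ ht =>
  mem_range_of_exists_le_of_exists_ge continuous_stdCdf
    (tendsto_stdCdf_atBot.eventually_le_const ht.1).exists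
    (tendsto_stdCdf_atTop.eventually_const_le ht.2).exists

lemma stdPdf_eq_stdPdf_sub_mul_exp (θ z : ℝ) :
    stdPdf z = stdPdf (z - θ) * exp (θ ^ 2 / 2 - θ * z) := by
  rw [stdPdf, stdPdf, mul_assoc, ← exp_add]
  congr 2
  ring

lemma integrable_comp_stdCdf_mul_stdPdf {g f : ℝ → ℝ} (hg : Continuous g) (hf : Continuous f) :
    Integrable (fun z => g (stdCdf (f z)) * stdPdf z) := by
  obtain ⟨C, hC⟩ := isCompact_Icc.exists_bound_of_continuousOn (hg.continuousOn (s := Icc 0 1))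
  exact integrable_stdPdf.bdd_mul (hg.comp (continuous_stdCdf.comp hf)).aestronglyMeasurable
    (ae_of_all _ fun z => hC _ (stdCdf_mem_Icc _))

lemma integral_comp_stdCdf_mul_stdPdf {g : ℝ → ℝ} (hg : Continuous g) :
    ∫ z, g (stdCdf z) * stdPdf z = ∫ t in (0 : ℝ)..1, g t := by
  set G : ℝ → ℝ := fun x => ∫ t in (0 : ℝ)..x, g t
  have hG : Continuous G :=
    intervalIntegral.continuous_primitive (fun _ _ => hg.intervalIntegrable _ _) 0
  rw [integral_of_hasDerivAt_of_tendsto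
    (fun z => (hg.integral_hasStrictDerivAt 0 _).hasDerivAt.comp z (hasDerivAt_stdCdf z))
    (integrable_comp_stdCdf_mul_stdPdf hg continuous_id)
    (hG.continuousAt.tendsto.comp tendsto_stdCdf_atBot)
    (hG.continuousAt.tendsto.comp tendsto_stdCdf_atTop)]
  simp [G]

lemma binCDF_natCast (k n : ℕ) (p : ℝ) :
    binCDF k n p = ∑ j ∈ range (k + 1), (n.choose j : ℝ) * p ^ j * (1 - p) ^ (n - j) := by
  rw [binCDF, show ((k : ℤ) + 1).toNat = k + 1 by omega]

@[fun_prop]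
lemma continuous_binCDF (k : ℤ) (n : ℕ) : Continuous (binCDF k n) := by
  unfold binCDF
  fun_prop

lemma binCDF_at_zero (k n : ℕ) : binCDF k n 0 = 1 := by
  rw [binCDF_natCast, sum_range_succ']
  simp

lemma binCDF_at_one {k n : ℕ} (hk : k < n) : binCDF k n 1 = 0 := by
  rw [binCDF_natCast]
  refine sum_eq_zero fun j hj => ?_
  simp [Nat.sub_ne_zero_of_lt (lt_of_lt_of_le (mem_range.1 hj) hk)]

lemma hasDerivAt_binCDF (k n : ℕ) (t : ℝ) :
    HasDerivAt (binCDF k (n + 1))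
      (-((n + 1) * (n.choose k * t ^ k * (1 - t) ^ (n - k)))) t := by
  induction k with
  | zero =>
    have hS : binCDF (0 : ℕ) (n + 1) = fun p => (1 - p) ^ (n + 1) := by
      ext p
      rw [binCDF_natCast]
      simp
    rw [hS]
    refine (((hasDerivAt_id' t).const_sub 1).fun_pow (n + 1)).congr_deriv ?_
    simp
  | succ k ih =>
    have e₁ : ((n : ℝ) + 1) * n.choose k = ((n + 1).choose (k + 1) : ℝ) * (k + 1) := by
      exact_mod_cast Nat.add_one_mul_choose_eq n k
    have e₂ : (n.choose (k + 1) : ℝ) * (n + 1) = ((n + 1).choose (k + 1) : ℝ) * (n - k : ℕ) := by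
      exact_mod_cast Nat.add_sub_add_right n 1 k ▸ Nat.choose_mul_succ_eq n (k + 1)
    set C : ℝ := (((n + 1).choose (k + 1) : ℕ) : ℝ)
    have hS : binCDF (k + 1 : ℕ) (n + 1) = fun p =>
        binCDF k (n + 1) p + C * p ^ (k + 1) * (1 - p) ^ (n - k) := by
      ext p
      rw [binCDF_natCast, binCDF_natCast, sum_range_succ _ (k + 1)]
      simp [C]
    have hterm : HasDerivAt (fun p => C * p ^ (k + 1) * (1 - p) ^ (n - k))
        (C * ((k + 1) * t ^ k) * (1 - t) ^ (n - k)
          + C * t ^ (k + 1) * ((n - k : ℕ) * (1 - t) ^ (n - (k + 1)) * -1)) t := by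
      refine (((hasDerivAt_pow (k + 1) t).const_mul C).mul
        (((hasDerivAt_id' t).const_sub 1).fun_pow (n - k))).congr_deriv ?_
      simp [Nat.sub_sub]
    rw [hS]
    refine (ih.add hterm).congr_deriv ?_
    linear_combination (-(t ^ k * (1 - t) ^ (n - k))) * e₁
      + (t ^ (k + 1) * (1 - t) ^ (n - (k + 1))) * e₂

lemma integral_choose_mul_pow_mul_one_sub_pow {j n : ℕ} (hj : j ≤ n) :
    ∫ t in (0 : ℝ)..1, (n.choose j : ℝ) * t ^ j * (1 - t) ^ (n - j) = 1 / (n + 1) := by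
  have hFTC := intervalIntegral.integral_eq_sub_of_hasDerivAt (a := 0) (b := 1)
    (fun t _ => hasDerivAt_binCDF j n t) ((by fun_prop : Continuous _).intervalIntegrable 0 1)
  rw [intervalIntegral.integral_neg, intervalIntegral.integral_const_mul,
    binCDF_at_one (Nat.lt_succ_of_le hj), binCDF_at_zero] at hFTC
  field_simp
  linarith

lemma integral_binCDF {k n : ℕ} (hk : k ≤ n) :
    ∫ t in (0 : ℝ)..1, binCDF k n t = (k + 1) / (n + 1) := by
  simp_rw [binCDF_natCast]
  rw [intervalIntegral.integral_finsetSum fun j _ =>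
      (by fun_prop : Continuous _).intervalIntegrable _ _,
    sum_congr rfl fun j hj => integral_choose_mul_pow_mul_one_sub_pow
      (Nat.le_trans (Nat.lt_succ_iff.1 (mem_range.1 hj)) hk)]
  simp [div_eq_mul_inv]

section SignChange

variable {f f' : ℝ → ℝ} {a b : ℝ}

lemma strictMonoOn_Icc_of_hasDerivAt_pos (hf : ∀ t, HasDerivAt f (f' t) t)
    (hpos : ∀ t ∈ Ioo a b, 0 < f' t) : StrictMonoOn f (Icc a b) :=
  strictMonoOn_of_hasDerivWithinAt_pos (convex_Icc a b)
    (fun t _ => (hf t).continuousAt.continuousWithinAt) (fun t _ => (hf t).hasDerivWithinAt)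
    (by simpa only [interior_Icc] using hpos)

lemma strictAntiOn_Icc_of_hasDerivAt_neg (hf : ∀ t, HasDerivAt f (f' t) t)
    (hneg : ∀ t ∈ Ioo a b, f' t < 0) : StrictAntiOn f (Icc a b) :=
  strictAntiOn_of_hasDerivWithinAt_neg (convex_Icc a b)
    (fun t _ => (hf t).continuousAt.continuousWithinAt) (fun t _ => (hf t).hasDerivWithinAt)
    (by simpa only [interior_Icc] using hneg)

lemma lt_of_hasDerivAt_pos_of_ne {μ : ℝ} (hf : ∀ t, HasDerivAt f (f' t) t) (haμ : a < μ)
    (hμb : μ < b) (hpos : ∀ t ∈ Ioo a b, t ≠ μ → 0 < f' t) : f a < f b :=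
  calc f a < f μ := strictMonoOn_Icc_of_hasDerivAt_pos hf
          (fun t ht => hpos t ⟨ht.1, ht.2.trans hμb⟩ ht.2.ne) (left_mem_Icc.2 haμ.le)
          (right_mem_Icc.2 haμ.le) haμ
    _ < f b := strictMonoOn_Icc_of_hasDerivAt_pos hf
          (fun t ht => hpos t ⟨haμ.trans ht.1, ht.2⟩ ht.1.ne') (left_mem_Icc.2 hμb.le)
          (right_mem_Icc.2 hμb.le) hμb

lemma exists_sign_change_of_hasDerivAt {t₁ t₂ : ℝ} (hf : ∀ t, HasDerivAt f (f' t) t)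
    (ha : f a = 0) (hb : f b = 0) (hat₁ : a < t₁) (ht₁₂ : t₁ < t₂) (ht₂b : t₂ < b)
    (hpos₁ : ∀ t ∈ Ioo a t₁, 0 < f' t) (hneg : ∀ t ∈ Ioo t₁ t₂, f' t < 0)
    (hpos₂ : ∀ t ∈ Ioo t₂ b, 0 < f' t) :
    ∃ c ∈ Ioo t₁ t₂, (∀ t ∈ Icc a c, 0 ≤ f t) ∧ (∀ t ∈ Icc c b, f t ≤ 0) ∧ 0 < f t₁ := by
  have hmono₁ := strictMonoOn_Icc_of_hasDerivAt_pos hf hpos₁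
  have hanti := strictAntiOn_Icc_of_hasDerivAt_neg hf hneg
  have hmono₂ := strictMonoOn_Icc_of_hasDerivAt_pos hf hpos₂
  have hft₁ : 0 < f t₁ := ha ▸ hmono₁ (left_mem_Icc.2 hat₁.le) (right_mem_Icc.2 hat₁.le) hat₁
  have hft₂ : f t₂ < 0 := hb ▸ hmono₂ (left_mem_Icc.2 ht₂b.le) (right_mem_Icc.2 ht₂b.le) ht₂b
  obtain ⟨c, ⟨ht₁c, hct₂⟩, hc⟩ := intermediate_value_Ioo' ht₁₂.le
    (fun t _ => (hf t).continuousAt.continuousWithinAt) ⟨hft₂, hft₁⟩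
  refine ⟨c, ⟨ht₁c, hct₂⟩, fun t ⟨hat, htc⟩ => ?_, fun t ⟨hct, htb⟩ => ?_, hft₁⟩
  · rcases le_total t t₁ with htt₁ | ht₁t
    · exact ha ▸ hmono₁.monotoneOn (left_mem_Icc.2 hat₁.le) ⟨hat, htt₁⟩ hat
    · exact hc ▸ hanti.antitoneOn ⟨ht₁t, htc.trans hct₂.le⟩ ⟨ht₁c.le, hct₂.le⟩ htc
  · rcases le_total t t₂ with htt₂ | ht₂t
    · exact hc ▸ hanti.antitoneOn ⟨ht₁c.le, hct₂.le⟩ ⟨ht₁c.le.trans hct, htt₂⟩ hct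
    · exact hb ▸ hmono₂.monotoneOn ⟨ht₂t, htb⟩ (right_mem_Icc.2 ht₂b.le) htb

end SignChange

lemma exists_crossings_of_unimodal {u : ℝ → ℝ} {a b μ r : ℝ} (hu : ContinuousOn u (Icc a b))
    (hmono : StrictMonoOn u (Icc a μ)) (hanti : StrictAntiOn u (Icc μ b))
    (haμ : a ≤ μ) (hμb : μ ≤ b) (ha : u a < r) (hb : u b < r) (hr : r < u μ) :
    ∃ t₁ t₂, a < t₁ ∧ t₁ < t₂ ∧ t₂ < b ∧ (∀ t ∈ Ioo a t₁, u t < r) ∧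
      (∀ t ∈ Ioo t₁ t₂, r < u t) ∧ (∀ t ∈ Ioo t₂ b, u t < r) := by
  obtain ⟨t₁, ⟨hat₁, ht₁μ⟩, hut₁⟩ :=
    intermediate_value_Ioo haμ (hu.mono (Icc_subset_Icc le_rfl hμb)) ⟨ha, hr⟩
  obtain ⟨t₂, ⟨hμt₂, ht₂b⟩, hut₂⟩ :=
    intermediate_value_Ioo' hμb (hu.mono (Icc_subset_Icc haμ le_rfl)) ⟨hb, hr⟩
  refine ⟨t₁, t₂, hat₁, ht₁μ.trans hμt₂, ht₂b, fun t ⟨hat, htt₁⟩ => ?_, fun t ⟨ht₁t, htt₂⟩ => ?_,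
    fun t ⟨ht₂t, htb⟩ => ?_⟩
  · exact hut₁ ▸ hmono ⟨hat.le, (htt₁.trans ht₁μ).le⟩ ⟨hat₁.le, ht₁μ.le⟩ htt₁
  · rcases le_total t μ with htμ | hμt
    · exact hut₁ ▸ hmono ⟨hat₁.le, ht₁μ.le⟩ ⟨hat₁.le.trans ht₁t.le, htμ⟩ ht₁t
    · exact hut₂ ▸ hanti ⟨hμt, (htt₂.trans ht₂b).le⟩ ⟨hμt₂.le, ht₂b.le⟩ htt₂
  · exact hut₂ ▸ hanti ⟨hμt₂.le, ht₂b.le⟩ ⟨(hμt₂.trans ht₂t).le, htb.le⟩ ht₂t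

lemma hasDerivAt_pow_mul_one_sub_pow (a b : ℕ) (t : ℝ) :
    HasDerivAt (fun t : ℝ => t ^ (a + 1) * (1 - t) ^ (b + 1))
      (t ^ a * (1 - t) ^ b * ((a + 1) - (a + b + 2) * t)) t := by
  refine ((hasDerivAt_pow (a + 1) t).mul
    (((hasDerivAt_id' t).const_sub 1).fun_pow (b + 1))).congr_deriv ?_
  push_cast
  ring

lemma strictMonoOn_pow_mul_one_sub_pow (a b : ℕ) :
    StrictMonoOn (fun t : ℝ => t ^ (a + 1) * (1 - t) ^ (b + 1))
      (Icc 0 ((a + 1) / (a + b + 2))) := by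
  refine strictMonoOn_Icc_of_hasDerivAt_pos (hasDerivAt_pow_mul_one_sub_pow a b)
    fun t ⟨ht0, htμ⟩ => ?_
  rw [lt_div_iff₀ (by positivity)] at htμ
  have : 0 < 1 - t := by nlinarith
  have : 0 < (a + 1) - (a + b + 2) * t := by linarith
  positivity

lemma strictAntiOn_pow_mul_one_sub_pow (a b : ℕ) :
    StrictAntiOn (fun t : ℝ => t ^ (a + 1) * (1 - t) ^ (b + 1))
      (Icc ((a + 1) / (a + b + 2)) 1) := by
  refine strictAntiOn_Icc_of_hasDerivAt_neg (hasDerivAt_pow_mul_one_sub_pow a b)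
    fun t ⟨hμt, ht1⟩ => ?_
  rw [div_lt_iff₀ (by positivity)] at hμt
  have : 0 < t := by nlinarith
  have : 0 < 1 - t := by linarith
  have : (a + 1) - (a + b + 2) * t < 0 := by linarith
  exact mul_neg_of_pos_of_neg (by positivity) this

lemma exists_sign_change_of_hasDerivAt_unimodal {f g u : ℝ → ℝ} {a b μ r : ℝ}
    (hf : ∀ t, HasDerivAt f (g t * (r - u t)) t) (hg : ∀ t ∈ Ioo a b, 0 < g t)
    (hfa : f a = 0) (hfb : f b = 0) (hu : ContinuousOn u (Icc a b))
    (hmono : StrictMonoOn u (Icc a μ)) (hanti : StrictAntiOn u (Icc μ b)) (hμ : μ ∈ Ioo a b)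
    (hua : u a < r) (hub : u b < r) :
    ∃ c ∈ Ioo a b, (∀ t ∈ Icc a c, 0 ≤ f t) ∧ (∀ t ∈ Icc c b, f t ≤ 0) ∧
      ∃ t ∈ Ioo a b, 0 < f t := by
  have hpos : ∀ t ∈ Ioo a b, u t < r → 0 < g t * (r - u t) := fun t ht hut =>
    mul_pos (hg t ht) (sub_pos.2 hut)
  have hneg : ∀ t ∈ Ioo a b, r < u t → g t * (r - u t) < 0 := fun t ht hut =>
    mul_neg_of_pos_of_neg (hg t ht) (sub_neg.2 hut)
  -- otherwise `f' > 0` away from `μ`, contradicting `f a = f b`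
  have hr : r < u μ := by
    by_contra! hμr
    refine (lt_of_hasDerivAt_pos_of_ne hf hμ.1 hμ.2 fun t ht htμ => hpos t ht ?_).ne
      (hfa.trans hfb.symm)
    rcases htμ.lt_or_gt with htμ | hμt
    · exact (hmono ⟨ht.1.le, htμ.le⟩ ⟨hμ.1.le, le_rfl⟩ htμ).trans_le hμr
    · exact (hanti ⟨le_rfl, hμ.2.le⟩ ⟨hμt.le, ht.2.le⟩ hμt).trans_le hμr
  obtain ⟨t₁, t₂, ht₁, ht₁₂, ht₂, hu₁, hu₁₂, hu₂⟩ :=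
    exists_crossings_of_unimodal hu hmono hanti hμ.1.le hμ.2.le hua hub hr
  obtain ⟨c, hc, hleft, hright, hft₁⟩ := exists_sign_change_of_hasDerivAt hf hfa hfb ht₁ ht₁₂ ht₂
    (fun t ht => hpos t ⟨ht.1, ht.2.trans (ht₁₂.trans ht₂)⟩ (hu₁ t ht))
    (fun t ht => hneg t ⟨ht₁.trans ht.1, ht.2.trans ht₂⟩ (hu₁₂ t ht))
    (fun t ht => hpos t ⟨(ht₁.trans ht₁₂).trans ht.1, ht.2⟩ (hu₂ t ht))
  exact ⟨c, ⟨ht₁.trans hc.1, hc.2.trans ht₂⟩, hleft, hright, t₁, ⟨ht₁, ht₁₂.trans ht₂⟩, hft₁⟩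

lemma exists_sign_change_binCDF_sub {k₁ k₂ l₁ l₂ : ℕ} (hk : k₁ < k₂) (hl : l₁ < l₂) :
    ∃ c ∈ Ioo (0 : ℝ) 1,
      (∀ t ∈ Icc 0 c, 0 ≤ binCDF k₂ (k₂ + l₂ + 1) t - binCDF k₁ (k₁ + l₁ + 1) t) ∧
      (∀ t ∈ Icc c 1, binCDF k₂ (k₂ + l₂ + 1) t - binCDF k₁ (k₁ + l₁ + 1) t ≤ 0) ∧
      ∃ t ∈ Ioo (0 : ℝ) 1, 0 < binCDF k₂ (k₂ + l₂ + 1) t - binCDF k₁ (k₁ + l₁ + 1) t := by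
  obtain ⟨a, rfl⟩ := Nat.exists_eq_add_of_lt hk
  obtain ⟨b, rfl⟩ := Nat.exists_eq_add_of_lt hl
  set D₁ : ℝ := (k₁ + l₁ + 1) * (k₁ + l₁).choose k₁
  set D₂ : ℝ := (k₁ + a + 1 + (l₁ + b + 1) + 1) * (k₁ + a + 1 + (l₁ + b + 1)).choose (k₁ + a + 1)
  have hD₂ : 0 < D₂ := by positivity [Nat.choose_pos (Nat.le_add_right (k₁ + a + 1) (l₁ + b + 1))]
  have hD₁D₂ : 0 < D₁ / D₂ := div_pos (by positivity [Nat.choose_pos (Nat.le_add_right k₁ l₁)]) hD₂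
  refine exists_sign_change_of_hasDerivAt_unimodal (g := fun t => D₂ * t ^ k₁ * (1 - t) ^ l₁)
    (r := D₁ / D₂) (fun t => ?_)
    (fun t ⟨ht0, ht1⟩ => mul_pos (mul_pos hD₂ (pow_pos ht0 _)) (pow_pos (sub_pos.2 ht1) _))
    ?_ ?_ (by fun_prop) (strictMonoOn_pow_mul_one_sub_pow a b)
    (strictAntiOn_pow_mul_one_sub_pow a b)
    ⟨by positivity, (div_lt_one (by positivity)).2 (by linarith)⟩ (by simpa) (by simpa)
  · refine ((hasDerivAt_binCDF _ _ t).sub (hasDerivAt_binCDF k₁ (k₁ + l₁) t)).congr_deriv ?_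
    rw [mul_sub, show D₂ * t ^ k₁ * (1 - t) ^ l₁ * (D₁ / D₂) = D₁ * t ^ k₁ * (1 - t) ^ l₁ by
      field_simp]
    simp only [D₁, D₂, Nat.add_sub_cancel_left]
    push_cast
    ring
  · rw [binCDF_at_zero, binCDF_at_zero, sub_self]
  · rw [binCDF_at_one (by omega), binCDF_at_one (by omega), sub_self]

lemma integral_mul_pos_of_sign_change {F w : ℝ → ℝ} {c : ℝ} (hF : Continuous F)
    (hw : Continuous w) (hw_anti : StrictAnti w) (hFi : Integrable F)
    (hFwi : Integrable fun z => F z * w z) (hF_int : ∫ z, F z = 0)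
    (hleft : ∀ z ≤ c, 0 ≤ F z) (hright : ∀ z ≥ c, F z ≤ 0) (hne : ∃ z, F z ≠ 0) :
    0 < ∫ z, F z * w z := by
  have hFwc : Integrable fun z => F z * (w z - w c) := by
    simpa only [mul_sub, Pi.sub_def] using hFwi.sub (hFi.mul_const (w c))
  -- subtracting `w c * ∫ F = 0` makes the integrand nonnegative
  have hshift : ∫ z, F z * w z = ∫ z, F z * (w z - w c) := by
    simp_rw [mul_sub]
    rw [integral_sub hFwi (hFi.mul_const _), integral_mul_const, hF_int, zero_mul, sub_zero]
  have hnonneg : ∀ z, 0 ≤ F z * (w z - w c) := fun z => by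
    rcases le_total z c with hz | hz
    · exact mul_nonneg (hleft z hz) (sub_nonneg.2 (hw_anti.antitone hz))
    · exact mul_nonneg_of_nonpos_of_nonpos (hright z hz) (sub_nonpos.2 (hw_anti.antitone hz))
  obtain ⟨z₀, hz₀⟩ := hne
  have hz₀c : z₀ ≠ c := fun h => hz₀ (le_antisymm (hright z₀ h.ge) (hleft z₀ h.le))
  rw [hshift]
  exact integral_pos_of_integrable_nonneg_nonzero (hF.mul (hw.sub continuous_const)) hFwc
    hnonneg (mul_ne_zero hz₀ (sub_ne_zero.2 (hw_anti.injective.ne hz₀c)))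

lemma integral_binCDF_comp_stdCdf_sub_lt {θ : ℝ} (hθ : 0 < θ) {k₁ k₂ l₁ l₂ : ℕ} (hk : k₁ < k₂)
    (hl : l₁ < l₂) (hlevel : ((k₁ : ℝ) + 1) / (k₁ + l₁ + 2) = (k₂ + 1) / (k₂ + l₂ + 2)) :
    ∫ z, binCDF k₁ (k₁ + l₁ + 1) (stdCdf (z - θ)) * stdPdf z <
      ∫ z, binCDF k₂ (k₂ + l₂ + 1) (stdCdf (z - θ)) * stdPdf z := by
  set h := fun t => binCDF k₂ (k₂ + l₂ + 1) t - binCDF k₁ (k₁ + l₁ + 1) t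
  have hh : Continuous h := (continuous_binCDF _ _).sub (continuous_binCDF _ _)
  have hdiff : ∫ z, h (stdCdf (z - θ)) * stdPdf z =
      (∫ z, binCDF k₂ (k₂ + l₂ + 1) (stdCdf (z - θ)) * stdPdf z)
        - ∫ z, binCDF k₁ (k₁ + l₁ + 1) (stdCdf (z - θ)) * stdPdf z := by
    simp_rw [h, sub_mul]
    exact integral_sub
      (integrable_comp_stdCdf_mul_stdPdf (continuous_binCDF _ _) (continuous_sub_right θ))
      (integrable_comp_stdCdf_mul_stdPdf (continuous_binCDF _ _) (continuous_sub_right θ))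
  have hmean : ∫ z, h (stdCdf (z - θ)) * stdPdf (z - θ) = 0 := by
    rw [integral_sub_right_eq_self (fun z => h (stdCdf z) * stdPdf z),
      integral_comp_stdCdf_mul_stdPdf hh, intervalIntegral.integral_sub
        ((continuous_binCDF _ _).intervalIntegrable 0 1)
        ((continuous_binCDF _ _).intervalIntegrable 0 1),
      integral_binCDF (by omega), integral_binCDF (by omega), sub_eq_zero]
    convert hlevel.symm using 2 <;> push_cast <;> ring
  obtain ⟨c, hc, hleft, hright, t₀, ht₀, hh₀⟩ := exists_sign_change_binCDF_sub hk hl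
  obtain ⟨zc, hzc⟩ := Ioo_subset_range_stdCdf hc
  obtain ⟨z₀, hz₀⟩ := Ioo_subset_range_stdCdf ht₀
  -- `exp (θ ^ 2 / 2 - θ * z) = φ z / φ (z - θ)` is the likelihood ratio, decreasing in `z`
  have hpos : 0 < ∫ z, h (stdCdf (z - θ)) * stdPdf (z - θ) * exp (θ ^ 2 / 2 - θ * z) := by
    refine integral_mul_pos_of_sign_change (c := zc + θ) (by fun_prop) (by fun_prop)
      (fun x y hxy => exp_lt_exp.2 (by nlinarith))
      ((integrable_comp_stdCdf_mul_stdPdf hh continuous_id).comp_sub_right θ) ?_ hmean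
      (fun z hz => ?_) (fun z hz => ?_) ⟨z₀ + θ, ?_⟩
    · simpa only [mul_assoc, ← stdPdf_eq_stdPdf_sub_mul_exp] using
        integrable_comp_stdCdf_mul_stdPdf hh (continuous_sub_right θ)
    · exact mul_nonneg (hleft _ ⟨(stdCdf_mem_Icc _).1, hzc ▸ monotone_stdCdf (by linarith)⟩)
        (stdPdf_pos _).le
    · exact mul_nonpos_of_nonpos_of_nonneg
        (hright _ ⟨hzc ▸ monotone_stdCdf (by linarith), (stdCdf_mem_Icc _).2⟩) (stdPdf_pos _).le
    · rw [add_sub_cancel_right, hz₀]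
      exact (mul_pos hh₀ (stdPdf_pos _)).ne'
  simp_rw [mul_assoc, ← stdPdf_eq_stdPdf_sub_mul_exp] at hpos
  linarith

lemma power_eq_integral_binCDF (Θ α : ℝ) {k l : ℕ} (h : ((k + 1 : ℕ) : ℝ) = (k + l + 2 : ℕ) * α) :
    power Θ (k + l + 2) α = ∫ z, binCDF k (k + l + 1) (stdCdf (z - Θ)) * stdPdf z := by
  rw [power, ← h, Int.floor_natCast]
  simp

theorem power_increasing_in_m (α Θ : ℝ) (hα : α ∈ Set.Ioo (0 : ℝ) 1) (hΘ : 0 < Θ)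
    (m₁ m₂ K₁ K₂ : ℕ) (hm₁ : 0 < m₁) (hm : m₁ < m₂)
    (hK₁ : (K₁ : ℝ) = (m₁ : ℝ) * α) (hK₂ : (K₂ : ℝ) = (m₂ : ℝ) * α)
    (hK₁pos : 1 ≤ K₁) (hK₂pos : 1 ≤ K₂) :
    power Θ m₁ α < power Θ m₂ α := by
  obtain ⟨hα₀, hα₁⟩ := hα
  have hm₁R : (0 : ℝ) < m₁ := by exact_mod_cast hm₁
  have hmR : (m₁ : ℝ) < m₂ := by exact_mod_cast hm
  have hK₁m₁ : K₁ < m₁ := by exact_mod_cast (show (K₁ : ℝ) < m₁ by rw [hK₁]; nlinarith)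
  have hK₂m₂ : K₂ < m₂ := by exact_mod_cast (show (K₂ : ℝ) < m₂ by rw [hK₂]; nlinarith)
  have hK : K₁ < K₂ := by exact_mod_cast (show (K₁ : ℝ) < K₂ by rw [hK₁, hK₂]; nlinarith)
  have hmK : m₁ + K₂ < m₂ + K₁ := by
    exact_mod_cast (show (m₁ : ℝ) + K₂ < m₂ + K₁ by rw [hK₁, hK₂]; nlinarith)
  obtain ⟨k₁, rfl⟩ := Nat.exists_eq_add_of_le' hK₁pos
  obtain ⟨k₂, rfl⟩ := Nat.exists_eq_add_of_le' hK₂pos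
  obtain ⟨l₁, rfl⟩ : ∃ l, m₁ = k₁ + l + 2 := ⟨m₁ - k₁ - 2, by omega⟩
  obtain ⟨l₂, rfl⟩ : ∃ l, m₂ = k₂ + l + 2 := ⟨m₂ - k₂ - 2, by omega⟩
  rw [power_eq_integral_binCDF Θ α hK₁, power_eq_integral_binCDF Θ α hK₂]
  refine integral_binCDF_comp_stdCdf_sub_lt hΘ (by omega) (by omega) ?_
  push_cast at hK₁ hK₂
  rw [hK₁, hK₂]
  field_simp
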